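/- Let Z ∈ ℂ^{n1×n2×n3} admit a skinny transformed tensor SVD Z = U ⋄ S ⋄ Vᴴ, let T be the subspace determined by U and V, and let Ω ⊆ [n1]×[n2]×[n3]. Suppose Y ∈ ℂ^{n1×n2×n3} satisfies P_Ω(Y) = Y, ‖P_T(Y) − U ⋄ Vᴴ‖_F ≤ 1/(4 n_(1) n_3), and ‖P_{T⊥}(Y)‖ ≤ 1/2 (tensor spectral norm). Then for every W ∈ ℂ^{n1×n2×n3} with P_Ω(W) = 0, ‖Z + W‖_TTNN ≥ ‖Z‖_TTNN + (1/2)‖P_{T⊥}(W)‖_TTNN − (1/(4 n_(1) n_3))‖P_T(W)‖_F. -/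

import Mathlib

open scoped BigOperators ComplexConjugate
open MeasureTheory Matrix

noncomputable section

/-- A third-order complex tensor. -/
abbrev Tensor (n1 n2 n3 : ℕ) : Type := Fin n1 → Fin n2 → Fin n3 → ℂ

namespace Tensor

variable {n1 n2 n3 n4 r : ℕ}

/-- The `t`-th frontal slice of the transformed tensor `Φ[A]`. -/
def slice (Φ : Matrix (Fin n3) (Fin n3) ℂ) (A : Tensor n1 n2 n3) (t : Fin n3) :
    Matrix (Fin n1) (Fin n2) ℂ :=
  Matrix.of fun i j => ∑ k, Φ t k * A i j k

/-- Reconstruct a tensor from its transformed frontal slices (inverse transform `Φᴴ[·]`). -/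
def unslice (Φ : Matrix (Fin n3) (Fin n3) ℂ)
    (M : Fin n3 → Matrix (Fin n1) (Fin n2) ℂ) : Tensor n1 n2 n3 :=
  fun i j k => ∑ t, (starRingEnd ℂ) (Φ t k) * M t i j

/-- The Φ-product `A ⋄ B`. -/
def tprod (Φ : Matrix (Fin n3) (Fin n3) ℂ) (A : Tensor n1 n2 n3) (B : Tensor n2 n4 n3) :
    Tensor n1 n4 n3 :=
  unslice Φ fun t => slice Φ A t * slice Φ B t

/-- The conjugate transpose `Aᴴ` with respect to `Φ`. -/
def tconj (Φ : Matrix (Fin n3) (Fin n3) ℂ) (A : Tensor n1 n2 n3) : Tensor n2 n1 n3 :=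
  unslice Φ fun t => (slice Φ A t)ᴴ

/-- Frobenius norm of a tensor. -/
def frob (A : Tensor n1 n2 n3) : ℝ :=
  Real.sqrt (∑ i, ∑ j, ∑ k, Complex.normSq (A i j k))

/-- Entrywise inner product `⟨A, B⟩ = Σ conj(A) B`. -/
def tinner (A B : Tensor n1 n2 n3) : ℂ :=
  ∑ i, ∑ j, ∑ k, (starRingEnd ℂ) (A i j k) * B i j k

/-- `‖A‖_∞`, the max modulus of the entries. -/
def inftyNorm (A : Tensor n1 n2 n3) : ℝ :=
  ⨆ i, ⨆ j, ⨆ k, ‖A i j k‖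

/-- `‖A‖_{∞,2}`. -/
def infty2Norm (A : Tensor n1 n2 n3) : ℝ :=
  max (⨆ i : Fin n1, Real.sqrt (∑ b, ∑ k, Complex.normSq (A i b k)))
      (⨆ j : Fin n2, Real.sqrt (∑ a, ∑ k, Complex.normSq (A a j k)))

/-- The weighted norm `‖A‖_{∞,w}` for a weight vector `w`. -/
def inftyWNorm (w : Fin n3 → ℝ) (A : Tensor n1 n2 n3) : ℝ :=
  max (⨆ i : Fin n1, Real.sqrt (∑ b, ∑ k, (w k) ^ 2 * Complex.normSq (A i b k)))
      (⨆ j : Fin n2, Real.sqrt (∑ a, ∑ k, (w k) ^ 2 * Complex.normSq (A a j k)))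

/-- Spectral norm of a complex matrix (ℓ²→ℓ² operator norm). -/
def specNormM {m n : ℕ} (M : Matrix (Fin m) (Fin n) ℂ) : ℝ :=
  ‖LinearMap.toContinuousLinearMap (Matrix.toEuclideanLin M)‖

/-- Nuclear norm of a complex matrix: the sum of its singular values. -/
def nuclearNormM {m n : ℕ} (M : Matrix (Fin m) (Fin n) ℂ) : ℝ :=
  ∑ i, Real.sqrt ((Matrix.isHermitian_conjTranspose_mul_self M).eigenvalues i)

/-- Tensor spectral norm: max of spectral norms of transformed frontal slices. -/
def specNorm (Φ : Matrix (Fin n3) (Fin n3) ℂ) (A : Tensor n1 n2 n3) : ℝ :=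
  ⨆ t, specNormM (slice Φ A t)

/-- Transformed tensor nuclear norm. -/
def ttnn (Φ : Matrix (Fin n3) (Fin n3) ℂ) (A : Tensor n1 n2 n3) : ℝ :=
  ∑ t, nuclearNormM (slice Φ A t)

/-- The sampling projection `P_Ω`. -/
def projOmega (Ω : Set (Fin n1 × Fin n2 × Fin n3)) (A : Tensor n1 n2 n3) :
    Tensor n1 n2 n3 :=
  fun i j k => Ω.indicator (fun p => A p.1 p.2.1 p.2.2) (i, j, k)

/-- The column-basis tensor `e_ik ∈ ℂ^{n×1×n3}`. -/
def colBasis {n n3 : ℕ} (i : Fin n) (k : Fin n3) : Tensor n 1 n3 :=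
  fun a _ c => if a = i ∧ c = k then 1 else 0

/-- The unit tensor `E_ijk`. -/
def unitTensor (i : Fin n1) (j : Fin n2) (k : Fin n3) : Tensor n1 n2 n3 :=
  fun a b c => if a = i ∧ b = j ∧ c = k then 1 else 0

/-- The orthogonal projection `P_T` onto the subspace `T` determined by `U, V`. -/
def projT (Φ : Matrix (Fin n3) (Fin n3) ℂ) (U : Tensor n1 r n3) (V : Tensor n2 r n3)
    (X : Tensor n1 n2 n3) : Tensor n1 n2 n3 :=
  tprod Φ (tprod Φ U (tconj Φ U)) X + tprod Φ X (tprod Φ V (tconj Φ V))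
    - tprod Φ (tprod Φ (tprod Φ U (tconj Φ U)) X) (tprod Φ V (tconj Φ V))

/-- `P_{T⊥}(X) = X - P_T(X)`. -/
def projTperp (Φ : Matrix (Fin n3) (Fin n3) ℂ) (U : Tensor n1 r n3) (V : Tensor n2 r n3)
    (X : Tensor n1 n2 n3) : Tensor n1 n2 n3 :=
  X - projT Φ U V X

/-- Operator norm of a map on tensors, w.r.t. the Frobenius norm. -/
def opNorm (L : Tensor n1 n2 n3 → Tensor n1 n2 n3) : ℝ :=
  sSup ((fun X => frob (L X)) '' {X | frob X ≤ 1})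

/-- A skinny transformed tensor SVD `Z = U ⋄ S ⋄ Vᴴ`. -/
structure SkinnySVD (Φ : Matrix (Fin n3) (Fin n3) ℂ) (Z : Tensor n1 n2 n3) (r : ℕ)
    (U : Tensor n1 r n3) (S : Tensor r r n3) (V : Tensor n2 r n3) : Prop where
  factor : Z = tprod Φ (tprod Φ U S) (tconj Φ V)
  U_orth : ∀ t, (slice Φ U t)ᴴ * slice Φ U t = 1
  V_orth : ∀ t, (slice Φ V t)ᴴ * slice Φ V t = 1
  S_offdiag : ∀ t i j, i ≠ j → slice Φ S t i j = 0
  S_diag_real_nonneg : ∀ t i, (slice Φ S t i i).im = 0 ∧ 0 ≤ (slice Φ S t i i).re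

/-- The tensor incoherence conditions with parameter μ. -/
def Incoherent (Φ : Matrix (Fin n3) (Fin n3) ℂ) (Z : Tensor n1 n2 n3)
    (U : Tensor n1 r n3) (V : Tensor n2 r n3) (μ : ℝ) : Prop :=
  (∀ (i : Fin n1) (k : Fin n3),
      (frob (tprod Φ (tconj Φ U) (colBasis i k))) ^ 2
        ≤ μ * (∑ t, ((slice Φ Z t).rank : ℝ)) / (n1 * n3)) ∧
  (∀ (j : Fin n2) (k : Fin n3),
      (frob (tprod Φ (tconj Φ V) (colBasis j k))) ^ 2
        ≤ μ * (∑ t, ((slice Φ Z t).rank : ℝ)) / (n2 * n3))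

/-- Bernoulli measure on `Bool` with success probability ρ. -/
def berMeasure (ρ : ℝ) : Measure Bool :=
  ρ.toNNReal • Measure.dirac true + (1 - ρ).toNNReal • Measure.dirac false

instance (ρ : ℝ) : IsFiniteMeasure (berMeasure ρ) := by
  unfold berMeasure; infer_instance

/-- The i.i.d. Bernoulli sampling model `Ω ~ Ber(ρ)`. -/
def berPi (n1 n2 n3 : ℕ) (ρ : ℝ) : Measure ((Fin n1 × Fin n2 × Fin n3) → Bool) :=
  Measure.pi fun _ => berMeasure ρ

/-- The random set `Ω` determined by a Bernoulli sample. -/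
def omegaSet {n1 n2 n3 : ℕ} (ω : (Fin n1 × Fin n2 × Fin n3) → Bool) :
    Set (Fin n1 × Fin n2 × Fin n3) := {p | ω p = true}

end Tensor

open Tensor


/-!
Everything is checked one transformed frontal slice at a time: since `Φ` is unitary, the
Φ-product acts slicewise, `ttnn` is the sum of the slice nuclear norms and the entrywise inner
product is the sum of the slice trace pairings `Re tr (Aᴴ B)`.

On a slice `Z = U D Vᴴ` the nuclear norm is the dual of the spectral norm
(`Re tr (Gᴴ M) ≤ ‖G‖ ‖M‖_*`, with equality attained by the polar factor of `M`). Taking `B` of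
norm one attaining the nuclear norm of `P_{T⊥} W`, compressed to the orthogonal complements of
`U` and `V`, the matrix `G = U Vᴴ + B` still has norm at most one, and pairing it with `Z + W`
gives the subgradient inequality `‖Z + W‖_* ≥ ‖Z‖_* + Re⟨U Vᴴ, W⟩ + ‖P_{T⊥} W‖_*`.

Finally `⟨Y, W⟩ = 0` by disjointness of supports, and splitting `Y - U ⋄ Vᴴ` along `T ⊕ T⊥`
gives `Re⟨U ⋄ Vᴴ, W⟩ = -Re⟨P_T Y - U ⋄ Vᴴ, P_T W⟩ - Re⟨P_{T⊥} Y, P_{T⊥} W⟩`. The first term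
is bounded by Cauchy–Schwarz and the Frobenius condition on `Y`, the second by the
spectral/nuclear duality and the spectral condition on `Y`.
-/

open scoped Matrix.Norms.L2Operator MatrixOrder ComplexOrder InnerProductSpace
open WithLp (toLp)

namespace Tensor

section NuclearNorm

variable {m n r : ℕ}

lemma conjTranspose_mul_apply_eq_inner (A B : Matrix (Fin m) (Fin n) ℂ) (i : Fin n) :
    (Aᴴ * B) i i = ⟪toLp 2 (A.col i), toLp 2 (B.col i)⟫_ℂ := by
  simp [Matrix.mul_apply, EuclideanSpace.inner_eq_star_dotProduct, dotProduct, mul_comm]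

lemma norm_toLp_col_sq (A : Matrix (Fin m) (Fin n) ℂ) (i : Fin n) :
    ‖toLp 2 (A.col i)‖ ^ 2 = ((Aᴴ * A) i i).re := by
  rw [conjTranspose_mul_apply_eq_inner, inner_self_eq_norm_sq_to_K]
  norm_cast

lemma norm_toLp_col_eq_one {U : Matrix (Fin m) (Fin n) ℂ} (hU : Uᴴ * U = 1) (i : Fin n) :
    ‖toLp 2 (U.col i)‖ = 1 := by
  rw [← pow_eq_one_iff_of_nonneg (norm_nonneg _) two_ne_zero, norm_toLp_col_sq, hU]
  simp

lemma norm_toLp_mul_col_le (G : Matrix (Fin m) (Fin n) ℂ) (Y : Matrix (Fin n) (Fin r) ℂ)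
    (i : Fin r) : ‖toLp 2 ((G * Y).col i)‖ ≤ ‖G‖ * ‖toLp 2 (Y.col i)‖ := by
  have h : (G * Y).col i = G *ᵥ Y.col i := by
    ext a; simp [Matrix.mul_apply, Matrix.mulVec, dotProduct]
  simpa [h] using G.l2_opNorm_mulVec (toLp 2 (Y.col i))

lemma re_trace_conjTranspose_mul_mul_conjTranspose_le (G : Matrix (Fin m) (Fin n) ℂ)
    (X : Matrix (Fin m) (Fin r) ℂ) (Y : Matrix (Fin n) (Fin r) ℂ) :
    (Gᴴ * (X * Yᴴ)).trace.re ≤ ‖G‖ * ∑ i, ‖toLp 2 (X.col i)‖ * ‖toLp 2 (Y.col i)‖ := by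
  have htr : (Gᴴ * (X * Yᴴ)).trace = ∑ i, ((G * Y)ᴴ * X) i i := by
    rw [← Matrix.mul_assoc, Matrix.trace_mul_comm, Matrix.conjTranspose_mul, Matrix.mul_assoc]
    rfl
  rw [htr, Complex.re_sum, Finset.mul_sum]
  refine Finset.sum_le_sum fun i _ => ?_
  rw [conjTranspose_mul_apply_eq_inner]
  calc (⟪toLp 2 ((G * Y).col i), toLp 2 (X.col i)⟫_ℂ).re
      ≤ ‖toLp 2 ((G * Y).col i)‖ * ‖toLp 2 (X.col i)‖ :=
          (Complex.re_le_norm _).trans (norm_inner_le_norm _ _)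
    _ ≤ ‖G‖ * ‖toLp 2 (Y.col i)‖ * ‖toLp 2 (X.col i)‖ := by
        gcongr; exact norm_toLp_mul_col_le G Y i
    _ = _ := by ring

lemma nuclearNormM_nonneg (M : Matrix (Fin m) (Fin n) ℂ) : 0 ≤ nuclearNormM M :=
  Finset.sum_nonneg fun _ _ => Real.sqrt_nonneg _

def rightSingularVectors (M : Matrix (Fin m) (Fin n) ℂ) : Matrix (Fin n) (Fin n) ℂ :=
  (isHermitian_conjTranspose_mul_self M).eigenvectorUnitary

section RightSingularVectors

variable (M : Matrix (Fin m) (Fin n) ℂ)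

lemma conjTranspose_rightSingularVectors_mul_self :
    (rightSingularVectors M)ᴴ * rightSingularVectors M = 1 :=
  Unitary.star_mul_self_of_mem (isHermitian_conjTranspose_mul_self M).eigenvectorUnitary.2

lemma rightSingularVectors_mul_conjTranspose_self :
    rightSingularVectors M * (rightSingularVectors M)ᴴ = 1 :=
  Unitary.mul_star_self_of_mem (isHermitian_conjTranspose_mul_self M).eigenvectorUnitary.2

lemma conjTranspose_rightSingularVectors_mul_mul :
    (rightSingularVectors M)ᴴ * (Mᴴ * M) * rightSingularVectors M
      = Matrix.diagonal
          (fun i => ((isHermitian_conjTranspose_mul_self M).eigenvalues i : ℂ)) := by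
  have := (isHermitian_conjTranspose_mul_self M).conjStarAlgAut_star_eigenvectorUnitary
  simpa [Unitary.conjStarAlgAut_apply, Matrix.star_eq_conjTranspose, Function.comp_def,
    rightSingularVectors] using this

lemma nuclearNormM_eq_sum_norm_col :
    nuclearNormM M = ∑ i, ‖toLp 2 ((M * rightSingularVectors M).col i)‖ := by
  refine Finset.sum_congr rfl fun i _ => ?_
  rw [← Real.sqrt_sq (norm_nonneg _), norm_toLp_col_sq, Matrix.conjTranspose_mul,
    Matrix.mul_assoc, ← Matrix.mul_assoc Mᴴ, ← Matrix.mul_assoc,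
    conjTranspose_rightSingularVectors_mul_mul]
  simp

end RightSingularVectors

lemma re_trace_le_norm_mul_nuclearNormM (G M : Matrix (Fin m) (Fin n) ℂ) :
    (Gᴴ * M).trace.re ≤ ‖G‖ * nuclearNormM M := by
  set E := rightSingularVectors M
  have hM : M = M * E * Eᴴ := by
    rw [Matrix.mul_assoc, rightSingularVectors_mul_conjTranspose_self, Matrix.mul_one]
  calc (Gᴴ * M).trace.re = (Gᴴ * (M * E * Eᴴ)).trace.re := by rw [← hM]
    _ ≤ ‖G‖ * ∑ i, ‖toLp 2 ((M * E).col i)‖ * ‖toLp 2 (E.col i)‖ :=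
        re_trace_conjTranspose_mul_mul_conjTranspose_le G (M * E) E
    _ = ‖G‖ * nuclearNormM M := by
        simp [nuclearNormM_eq_sum_norm_col,
          norm_toLp_col_eq_one (conjTranspose_rightSingularVectors_mul_self M), E]

lemma exists_norm_le_one_re_trace_eq_nuclearNormM (M : Matrix (Fin m) (Fin n) ℂ) :
    ∃ B : Matrix (Fin m) (Fin n) ℂ, ‖B‖ ≤ 1 ∧ (Bᴴ * M).trace.re = nuclearNormM M := by
  set e := (isHermitian_conjTranspose_mul_self M).eigenvalues
  set E := rightSingularVectors M
  set D : Matrix (Fin n) (Fin n) ℂ := Matrix.diagonal fun i => ((√(e i))⁻¹ : ℝ)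
  have hED : Eᴴ * (Mᴴ * M) * E = Matrix.diagonal fun i => (e i : ℂ) :=
    conjTranspose_rightSingularVectors_mul_mul M
  have hK : (E * D * Eᴴ)ᴴ = E * D * Eᴴ := by
    simp [D, Matrix.conjTranspose_mul, Matrix.mul_assoc, Pi.star_def]
  have he : ∀ i, 0 ≤ e i := Matrix.eigenvalues_conjTranspose_mul_self_nonneg M
  have hE : E ∈ unitary (Matrix (Fin n) (Fin n) ℂ) :=
    (isHermitian_conjTranspose_mul_self M).eigenvectorUnitary.2
  -- `M (Mᴴ M)^{-1/2}`, inverting only the nonzero eigenvalues: the polar factor of `M`.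
  refine ⟨M * (E * D * Eᴴ), ?_, ?_⟩
  · have hBB : (M * (E * D * Eᴴ))ᴴ * (M * (E * D * Eᴴ))
        = E * Matrix.diagonal (fun i => (((√(e i))⁻¹ * e i * (√(e i))⁻¹ : ℝ) : ℂ)) * Eᴴ := by
      rw [Matrix.conjTranspose_mul, hK]
      calc E * D * Eᴴ * Mᴴ * (M * (E * D * Eᴴ))
          = E * (D * (Eᴴ * (Mᴴ * M) * E) * D) * Eᴴ := by simp only [Matrix.mul_assoc]
        _ = _ := by rw [hED]; simp [D, Matrix.diagonal_mul_diagonal]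
    have hnorm : ‖(M * (E * D * Eᴴ))ᴴ * (M * (E * D * Eᴴ))‖ ≤ 1 := by
      rw [hBB, ← Matrix.star_eq_conjTranspose,
        CStarRing.norm_mul_mem_unitary _ (Unitary.star_mem hE),
        CStarRing.norm_mem_unitary_mul _ hE, Matrix.l2_opNorm_diagonal]
      refine pi_norm_le_iff_of_nonneg zero_le_one |>.mpr fun i => ?_
      have hi : (√(e i))⁻¹ * e i * (√(e i))⁻¹ = e i / e i := by
        rw [show (√(e i))⁻¹ * e i * (√(e i))⁻¹ = e i / √(e i) ^ 2 by ring, Real.sq_sqrt (he i)]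
      rw [Complex.norm_real, hi, Real.norm_of_nonneg (div_nonneg (he i) (he i))]
      exact div_self_le_one _
    rw [Matrix.l2_opNorm_conjTranspose_mul_self] at hnorm
    nlinarith [norm_nonneg (M * (E * D * Eᴴ))]
  · have htr : ((M * (E * D * Eᴴ))ᴴ * M).trace = (D * (Eᴴ * (Mᴴ * M) * E)).trace := by
      rw [Matrix.conjTranspose_mul, hK, Matrix.mul_assoc, Matrix.mul_assoc, Matrix.mul_assoc,
        Matrix.trace_mul_comm]
      simp only [Matrix.mul_assoc]
    rw [htr, hED]
    simp only [D, Matrix.diagonal_mul_diagonal, Matrix.trace_diagonal, Complex.re_sum]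
    refine Finset.sum_congr rfl fun i _ => ?_
    rw [← Complex.ofReal_mul, Complex.ofReal_re, inv_mul_eq_div, Real.div_sqrt]

lemma nuclearNormM_mul_diagonal_mul_le {U : Matrix (Fin m) (Fin r) ℂ}
    {V : Matrix (Fin n) (Fin r) ℂ} (hU : Uᴴ * U = 1) (hV : Vᴴ * V = 1) {d : Fin r → ℝ}
    (hd : ∀ i, 0 ≤ d i) :
    nuclearNormM (U * Matrix.diagonal (fun i => (d i : ℂ)) * Vᴴ) ≤ ∑ i, d i := by
  obtain ⟨B, hB, hBM⟩ := exists_norm_le_one_re_trace_eq_nuclearNormM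
    (U * Matrix.diagonal (fun i => (d i : ℂ)) * Vᴴ)
  have hcol : ∀ i, ‖toLp 2 ((U * Matrix.diagonal (fun i => (d i : ℂ))).col i)‖ = d i := by
    intro i
    have : (U * Matrix.diagonal (fun i => (d i : ℂ))).col i = (d i : ℂ) • U.col i := by
      ext a; simp [Matrix.mul_diagonal, mul_comm]
    rw [this, WithLp.toLp_smul, norm_smul, norm_toLp_col_eq_one hU, Complex.norm_real,
      Real.norm_of_nonneg (hd i), mul_one]
  calc nuclearNormM (U * Matrix.diagonal (fun i => (d i : ℂ)) * Vᴴ)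
      = (Bᴴ * (U * Matrix.diagonal (fun i => (d i : ℂ)) * Vᴴ)).trace.re := hBM.symm
    _ ≤ ‖B‖ * ∑ i, d i := by
        simpa [hcol, norm_toLp_col_eq_one hV] using
          re_trace_conjTranspose_mul_mul_conjTranspose_le B
            (U * Matrix.diagonal (fun i => (d i : ℂ))) V
    _ ≤ ∑ i, d i := mul_le_of_le_one_left (Finset.sum_nonneg fun i _ => hd i) hB

lemma isStarProjection_mul_conjTranspose_self {V : Matrix (Fin n) (Fin r) ℂ} (hV : Vᴴ * V = 1) :
    IsStarProjection (V * Vᴴ) where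
  isIdempotentElem := by
    rw [IsIdempotentElem, Matrix.mul_assoc, ← Matrix.mul_assoc Vᴴ, hV, Matrix.one_mul]
  isSelfAdjoint := Matrix.isHermitian_mul_conjTranspose_self V

lemma norm_mul_conjTranspose_add_le_one {U : Matrix (Fin m) (Fin r) ℂ}
    {V : Matrix (Fin n) (Fin r) ℂ} {B : Matrix (Fin m) (Fin n) ℂ} (hU : Uᴴ * U = 1)
    (hV : Vᴴ * V = 1) (hB : ‖B‖ ≤ 1) (hUB : Uᴴ * B = 0) (hBV : B * V = 0) :
    ‖U * Vᴴ + B‖ ≤ 1 := by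
  set Q := V * Vᴴ
  have hQ : IsStarProjection Q := isStarProjection_mul_conjTranspose_self hV
  have hBQ : B * (1 - Q) = B := by
    rw [Matrix.mul_sub, Matrix.mul_one, ← Matrix.mul_assoc, hBV, Matrix.zero_mul, sub_zero]
  -- The cross terms vanish and `Bᴴ B ≤ 1` lives on the range of `1 - Q`, so `Gᴴ G ≤ Q + (1 - Q)`.
  have hGG : (U * Vᴴ + B)ᴴ * (U * Vᴴ + B) = Q + star (1 - Q) * (Bᴴ * B) * (1 - Q) := by
    have hBU : Bᴴ * U = 0 := by
      rw [← Matrix.conjTranspose_conjTranspose U, ← Matrix.conjTranspose_mul, hUB,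
        Matrix.conjTranspose_zero]
    rw [Matrix.star_eq_conjTranspose, ← Matrix.mul_assoc, ← Matrix.conjTranspose_mul,
      Matrix.mul_assoc, hBQ]
    simp only [Matrix.conjTranspose_add, Matrix.conjTranspose_mul,
      Matrix.conjTranspose_conjTranspose, Matrix.add_mul, Matrix.mul_add]
    rw [Matrix.mul_assoc V, ← Matrix.mul_assoc Uᴴ, hU, Matrix.one_mul, Matrix.mul_assoc V,
      hUB, Matrix.mul_zero, ← Matrix.mul_assoc, hBU, Matrix.zero_mul]
    abel
  have hBB : Bᴴ * B ≤ 1 := by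
    rw [← CStarAlgebra.norm_le_one_iff_of_nonneg _
      (Matrix.posSemidef_conjTranspose_mul_self B).nonneg, Matrix.l2_opNorm_conjTranspose_mul_self]
    nlinarith [norm_nonneg B]
  have hGG1 : (U * Vᴴ + B)ᴴ * (U * Vᴴ + B) ≤ 1 := by
    calc (U * Vᴴ + B)ᴴ * (U * Vᴴ + B) = Q + star (1 - Q) * (Bᴴ * B) * (1 - Q) := hGG
      _ ≤ Q + star (1 - Q) * 1 * (1 - Q) := by
          gcongr; exact star_left_conjugate_le_conjugate hBB _
      _ = 1 := by
          rw [Matrix.mul_one, hQ.one_sub.isSelfAdjoint.star_eq, hQ.one_sub.isIdempotentElem.eq]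
          abel
  have := (CStarAlgebra.norm_le_one_iff_of_nonneg _
    (Matrix.posSemidef_conjTranspose_mul_self (U * Vᴴ + B)).nonneg).mpr hGG1
  rw [Matrix.l2_opNorm_conjTranspose_mul_self] at this
  nlinarith [norm_nonneg (U * Vᴴ + B)]

lemma le_nuclearNormM_mul_diagonal_mul_add {U : Matrix (Fin m) (Fin r) ℂ}
    {V : Matrix (Fin n) (Fin r) ℂ} (hU : Uᴴ * U = 1) (hV : Vᴴ * V = 1) {d : Fin r → ℝ}
    (hd : ∀ i, 0 ≤ d i) (W : Matrix (Fin m) (Fin n) ℂ) :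
    nuclearNormM (U * Matrix.diagonal (fun i => (d i : ℂ)) * Vᴴ) + ((U * Vᴴ)ᴴ * W).trace.re
        + nuclearNormM ((1 - U * Uᴴ) * W * (1 - V * Vᴴ))
      ≤ nuclearNormM (U * Matrix.diagonal (fun i => (d i : ℂ)) * Vᴴ + W) := by
  set D := Matrix.diagonal (fun i => (d i : ℂ))
  have hP := (isStarProjection_mul_conjTranspose_self hU).one_sub
  have hQ := (isStarProjection_mul_conjTranspose_self hV).one_sub
  have hQV : (1 - V * Vᴴ) * V = 0 := by
    rw [Matrix.sub_mul, Matrix.mul_assoc, hV, Matrix.one_mul, Matrix.mul_one, sub_self]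
  obtain ⟨B₀, hB₀, hB₀W⟩ :=
    exists_norm_le_one_re_trace_eq_nuclearNormM ((1 - U * Uᴴ) * W * (1 - V * Vᴴ))
  set B := (1 - U * Uᴴ) * B₀ * (1 - V * Vᴴ)
  have hB : ‖B‖ ≤ 1 := by
    calc ‖B‖ ≤ ‖1 - U * Uᴴ‖ * ‖B₀‖ * ‖1 - V * Vᴴ‖ :=
          (Matrix.l2_opNorm_mul _ _).trans (by gcongr; exact Matrix.l2_opNorm_mul _ _)
      _ ≤ 1 * 1 * 1 := by gcongr; exacts [hP.norm_le, hQ.norm_le]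
      _ = 1 := by ring
  have hUB : Uᴴ * B = 0 := by
    have hUP : Uᴴ * (1 - U * Uᴴ) = 0 := by
      rw [Matrix.mul_sub, Matrix.mul_one, ← Matrix.mul_assoc, hU, Matrix.one_mul, sub_self]
    simp only [B, ← Matrix.mul_assoc, hUP, Matrix.zero_mul]
  have hBV : B * V = 0 := by
    simp only [B, Matrix.mul_assoc, hQV, Matrix.mul_zero]
  have hZ : ((U * Vᴴ + B)ᴴ * (U * D * Vᴴ)).trace.re = ∑ i, d i := by
    have hBU : Bᴴ * U = 0 := by
      rw [← Matrix.conjTranspose_conjTranspose U, ← Matrix.conjTranspose_mul, hUB,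
        Matrix.conjTranspose_zero]
    have : (U * Vᴴ + B)ᴴ * (U * D * Vᴴ) = V * D * Vᴴ := by
      rw [Matrix.conjTranspose_add, Matrix.conjTranspose_mul, Matrix.conjTranspose_conjTranspose,
        Matrix.add_mul]
      simp only [← Matrix.mul_assoc]
      rw [Matrix.mul_assoc V Uᴴ U, hU, hBU, Matrix.mul_one, Matrix.zero_mul, Matrix.zero_mul,
        add_zero]
    rw [this, Matrix.trace_mul_comm, ← Matrix.mul_assoc, hV, Matrix.one_mul]
    simp [D, Matrix.trace_diagonal, Complex.re_sum]
  have hW : ((U * Vᴴ + B)ᴴ * W).trace.re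
      = ((U * Vᴴ)ᴴ * W).trace.re + nuclearNormM ((1 - U * Uᴴ) * W * (1 - V * Vᴴ)) := by
    have hPh : (1 - U * Uᴴ)ᴴ = 1 - U * Uᴴ := hP.isSelfAdjoint.star_eq
    have hQh : (1 - V * Vᴴ)ᴴ = 1 - V * Vᴴ := hQ.isSelfAdjoint.star_eq
    rw [Matrix.conjTranspose_add, Matrix.add_mul, Matrix.trace_add, Complex.add_re, ← hB₀W]
    simp only [B, Matrix.conjTranspose_mul, hPh, hQh]
    congr 2
    rw [Matrix.mul_assoc, Matrix.trace_mul_comm]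
    simp only [Matrix.mul_assoc]
  have hsub := re_trace_le_norm_mul_nuclearNormM (U * Vᴴ + B) (U * D * Vᴴ + W)
  rw [Matrix.mul_add, Matrix.trace_add, Complex.add_re, hZ, hW] at hsub
  have := nuclearNormM_mul_diagonal_mul_le hU hV hd
  have := norm_mul_conjTranspose_add_le_one hU hV hB hUB hBV
  nlinarith [nuclearNormM_nonneg (U * D * Vᴴ + W)]

lemma trace_conjTranspose_mul (A B : Matrix (Fin m) (Fin n) ℂ) :
    (Aᴴ * B).trace = ∑ i, ∑ j, star (A i j) * B i j := by
  rw [Matrix.trace, Finset.sum_comm]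
  simp [Matrix.mul_apply]

lemma trace_conjTranspose_mul_eq_add {p : Matrix (Fin m) (Fin m) ℂ}
    {q : Matrix (Fin n) (Fin n) ℂ} (hp : IsStarProjection p) (hq : IsStarProjection q)
    (A B : Matrix (Fin m) (Fin n) ℂ) :
    (Aᴴ * B).trace
      = ((A - p * A * q)ᴴ * (B - p * B * q)).trace + ((p * A * q)ᴴ * (p * B * q)).trace := by
  have hpH : pᴴ = p := hp.isSelfAdjoint.star_eq
  have hqH : qᴴ = q := hq.isSelfAdjoint.star_eq
  have key : ∀ X : Matrix (Fin m) (Fin n) ℂ,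
      ((p * A * q)ᴴ * X).trace = (Aᴴ * (p * X * q)).trace := by
    intro X
    rw [Matrix.conjTranspose_mul, Matrix.conjTranspose_mul, hpH, hqH, Matrix.mul_assoc,
      Matrix.trace_mul_comm]
    simp only [Matrix.mul_assoc]
  have hpBq : p * (p * B * q) * q = p * B * q := by
    rw [← Matrix.mul_assoc, ← Matrix.mul_assoc, hp.isIdempotentElem.eq, Matrix.mul_assoc,
      hq.isIdempotentElem.eq]
  rw [Matrix.conjTranspose_sub, Matrix.sub_mul, Matrix.mul_sub, Matrix.mul_sub, Matrix.trace_sub,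
    Matrix.trace_sub, Matrix.trace_sub, key, key, hpBq]
  ring

end NuclearNorm

section Transform

variable {n1 n2 n3 n4 r : ℕ} {Φ : Matrix (Fin n3) (Fin n3) ℂ}

lemma slice_apply (Φ : Matrix (Fin n3) (Fin n3) ℂ) (A : Tensor n1 n2 n3) (t : Fin n3)
    (i : Fin n1) (j : Fin n2) : slice Φ A t i j = (Φ *ᵥ A i j) t := rfl

lemma slice_add (A B : Tensor n1 n2 n3) (t : Fin n3) :
    slice Φ (A + B) t = slice Φ A t + slice Φ B t := by
  ext i j
  simp [slice_apply, Matrix.mulVec_add]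

lemma slice_sub (A B : Tensor n1 n2 n3) (t : Fin n3) :
    slice Φ (A - B) t = slice Φ A t - slice Φ B t := by
  ext i j
  simp [slice_apply, Matrix.mulVec_sub]

lemma slice_unslice (hΦ : Φ ∈ Matrix.unitaryGroup (Fin n3) ℂ)
    (M : Fin n3 → Matrix (Fin n1) (Fin n2) ℂ) (t : Fin n3) : slice Φ (unslice Φ M) t = M t := by
  ext i j
  have hunslice : unslice Φ M i j = Φᴴ *ᵥ fun s => M s i j := by
    ext k; simp [unslice, Matrix.mulVec, dotProduct]
  rw [slice_apply, hunslice, Matrix.mulVec_mulVec, ← Matrix.star_eq_conjTranspose,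
    Unitary.mul_star_self_of_mem hΦ, Matrix.one_mulVec]

lemma slice_tprod (hΦ : Φ ∈ Matrix.unitaryGroup (Fin n3) ℂ) (A : Tensor n1 n2 n3)
    (B : Tensor n2 n4 n3) (t : Fin n3) :
    slice Φ (tprod Φ A B) t = slice Φ A t * slice Φ B t :=
  slice_unslice hΦ _ t

lemma slice_tconj (hΦ : Φ ∈ Matrix.unitaryGroup (Fin n3) ℂ) (A : Tensor n1 n2 n3) (t : Fin n3) :
    slice Φ (tconj Φ A) t = (slice Φ A t)ᴴ :=
  slice_unslice hΦ _ t

lemma tinner_eq_sum_trace (hΦ : Φ ∈ Matrix.unitaryGroup (Fin n3) ℂ) (A B : Tensor n1 n2 n3) :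
    tinner A B = ∑ t, ((slice Φ A t)ᴴ * slice Φ B t).trace := by
  have hdot : ∀ a b : Fin n3 → ℂ, star (Φ *ᵥ a) ⬝ᵥ (Φ *ᵥ b) = star a ⬝ᵥ b := by
    intro a b
    rw [Matrix.star_mulVec, Matrix.dotProduct_mulVec, Matrix.vecMul_vecMul,
      ← Matrix.dotProduct_mulVec, ← Matrix.star_eq_conjTranspose,
      Unitary.star_mul_self_of_mem hΦ, Matrix.one_mulVec]
  simp_rw [trace_conjTranspose_mul]
  rw [Finset.sum_comm]
  refine Finset.sum_congr rfl fun i _ => ?_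
  conv_rhs => rw [Finset.sum_comm]
  refine Finset.sum_congr rfl fun j _ => ?_
  simpa [slice_apply, dotProduct, mul_comm] using (hdot (A i j) (B i j)).symm

lemma slice_projT (hΦ : Φ ∈ Matrix.unitaryGroup (Fin n3) ℂ) (U : Tensor n1 r n3)
    (V : Tensor n2 r n3) (X : Tensor n1 n2 n3) (t : Fin n3) :
    slice Φ (projT Φ U V X) t = slice Φ X t - (1 - slice Φ U t * (slice Φ U t)ᴴ) * slice Φ X t
      * (1 - slice Φ V t * (slice Φ V t)ᴴ) := by
  simp only [projT, slice_sub, slice_add, slice_tprod hΦ, slice_tconj hΦ, Matrix.sub_mul,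
    Matrix.mul_sub, Matrix.one_mul, Matrix.mul_one, Matrix.mul_assoc]
  abel

lemma slice_projTperp (hΦ : Φ ∈ Matrix.unitaryGroup (Fin n3) ℂ) (U : Tensor n1 r n3)
    (V : Tensor n2 r n3) (X : Tensor n1 n2 n3) (t : Fin n3) :
    slice Φ (projTperp Φ U V X) t
      = (1 - slice Φ U t * (slice Φ U t)ᴴ) * slice Φ X t * (1 - slice Φ V t * (slice Φ V t)ᴴ) := by
  rw [projTperp, slice_sub, slice_projT hΦ, sub_sub_cancel]

end Transform

section Certificate

variable {n1 n2 n3 r : ℕ} {Φ : Matrix (Fin n3) (Fin n3) ℂ} {Z : Tensor n1 n2 n3}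
  {U : Tensor n1 r n3} {S : Tensor r r n3} {V : Tensor n2 r n3}

lemma SkinnySVD.slice_eq (hSVD : SkinnySVD Φ Z r U S V) (hΦ : Φ ∈ Matrix.unitaryGroup (Fin n3) ℂ)
    (t : Fin n3) :
    slice Φ Z t = slice Φ U t * Matrix.diagonal (fun i => ((slice Φ S t i i).re : ℂ))
      * (slice Φ V t)ᴴ := by
  have hS : slice Φ S t = Matrix.diagonal (fun i => ((slice Φ S t i i).re : ℂ)) := by
    ext i j
    rcases eq_or_ne i j with rfl | hij
    · simp [Complex.ext_iff, (hSVD.S_diag_real_nonneg t i).1]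
    · simp [hij, hSVD.S_offdiag t i j hij]
  rw [hSVD.factor, slice_tprod hΦ, slice_tprod hΦ, slice_tconj hΦ, ← hS]

lemma SkinnySVD.le_ttnn_add (hSVD : SkinnySVD Φ Z r U S V)
    (hΦ : Φ ∈ Matrix.unitaryGroup (Fin n3) ℂ) (W : Tensor n1 n2 n3) :
    ttnn Φ Z + (tinner (tprod Φ U (tconj Φ V)) W).re + ttnn Φ (projTperp Φ U V W)
      ≤ ttnn Φ (Z + W) := by
  rw [tinner_eq_sum_trace hΦ, Complex.re_sum, ttnn, ttnn, ttnn, ← Finset.sum_add_distrib,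
    ← Finset.sum_add_distrib]
  refine Finset.sum_le_sum fun t _ => ?_
  rw [slice_add, hSVD.slice_eq hΦ, slice_tprod hΦ, slice_tconj hΦ, slice_projTperp hΦ]
  exact le_nuclearNormM_mul_diagonal_mul_add (hSVD.U_orth t) (hSVD.V_orth t)
    (fun i => (hSVD.S_diag_real_nonneg t i).2) _

lemma tinner_sub_tprod_tconj (hΦ : Φ ∈ Matrix.unitaryGroup (Fin n3) ℂ)
    (hU : ∀ t, (slice Φ U t)ᴴ * slice Φ U t = 1) (hV : ∀ t, (slice Φ V t)ᴴ * slice Φ V t = 1)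
    (Y W : Tensor n1 n2 n3) :
    tinner (Y - tprod Φ U (tconj Φ V)) W
      = tinner (projT Φ U V Y - tprod Φ U (tconj Φ V)) (projT Φ U V W)
        + tinner (projTperp Φ U V Y) (projTperp Φ U V W) := by
  simp only [tinner_eq_sum_trace hΦ, ← Finset.sum_add_distrib]
  refine Finset.sum_congr rfl fun t _ => ?_
  simp only [slice_sub, slice_projT hΦ, slice_projTperp hΦ, slice_tprod hΦ, slice_tconj hΦ]
  set p := 1 - slice Φ U t * (slice Φ U t)ᴴ
  set q := 1 - slice Φ V t * (slice Φ V t)ᴴ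
  set G := slice Φ U t * (slice Φ V t)ᴴ
  have hp : IsStarProjection p := (isStarProjection_mul_conjTranspose_self (hU t)).one_sub
  have hq : IsStarProjection q := (isStarProjection_mul_conjTranspose_self (hV t)).one_sub
  have hpG : p * (slice Φ Y t - G) * q = p * slice Φ Y t * q := by
    have : p * G = 0 := by
      rw [Matrix.sub_mul, Matrix.one_mul, Matrix.mul_assoc, ← Matrix.mul_assoc (slice Φ U t)ᴴ,
        hU t, Matrix.one_mul, sub_self]
    rw [Matrix.mul_sub p, this, sub_zero]
  rw [trace_conjTranspose_mul_eq_add hp hq (slice Φ Y t - G), hpG, sub_right_comm]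

end Certificate

section Norms

variable {n1 n2 n3 : ℕ}

lemma frob_nonneg (A : Tensor n1 n2 n3) : 0 ≤ frob A := Real.sqrt_nonneg _

lemma ttnn_nonneg (Φ : Matrix (Fin n3) (Fin n3) ℂ) (A : Tensor n1 n2 n3) : 0 ≤ ttnn Φ A :=
  Finset.sum_nonneg fun _ _ => nuclearNormM_nonneg _

lemma tinner_sub_left (A B C : Tensor n1 n2 n3) : tinner (A - B) C = tinner A C - tinner B C := by
  simp [tinner, sub_mul, Finset.sum_sub_distrib]

lemma frob_eq_norm (A : Tensor n1 n2 n3) :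
    frob A = ‖toLp 2 (fun p : Fin n1 × Fin n2 × Fin n3 => A p.1 p.2.1 p.2.2)‖ := by
  simp [frob, EuclideanSpace.norm_eq, Fintype.sum_prod_type, Complex.normSq_eq_norm_sq]

lemma tinner_eq_inner (A B : Tensor n1 n2 n3) :
    tinner A B = ⟪toLp 2 (fun p : Fin n1 × Fin n2 × Fin n3 => A p.1 p.2.1 p.2.2),
      toLp 2 (fun p : Fin n1 × Fin n2 × Fin n3 => B p.1 p.2.1 p.2.2)⟫_ℂ := by
  simp [tinner, EuclideanSpace.inner_eq_star_dotProduct, dotProduct, Fintype.sum_prod_type,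
    mul_comm]

lemma norm_tinner_le_frob_mul_frob (A B : Tensor n1 n2 n3) : ‖tinner A B‖ ≤ frob A * frob B := by
  rw [tinner_eq_inner, frob_eq_norm, frob_eq_norm]
  exact norm_inner_le_norm _ _

lemma re_tinner_le_specNorm_mul_ttnn {Φ : Matrix (Fin n3) (Fin n3) ℂ}
    (hΦ : Φ ∈ Matrix.unitaryGroup (Fin n3) ℂ) (A B : Tensor n1 n2 n3) :
    (tinner A B).re ≤ specNorm Φ A * ttnn Φ B := by
  rw [tinner_eq_sum_trace hΦ, Complex.re_sum, ttnn, Finset.mul_sum]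
  refine Finset.sum_le_sum fun t _ => (re_trace_le_norm_mul_nuclearNormM _ _).trans ?_
  exact mul_le_mul_of_nonneg_right
    (le_ciSup (Set.finite_range fun s => specNormM (slice Φ A s)).bddAbove t)
    (nuclearNormM_nonneg _)

lemma tinner_eq_zero_of_projOmega {Ω : Set (Fin n1 × Fin n2 × Fin n3)} {Y W : Tensor n1 n2 n3}
    (hY : projOmega Ω Y = Y) (hW : projOmega Ω W = 0) : tinner Y W = 0 := by
  refine Finset.sum_eq_zero fun i _ =>
    Finset.sum_eq_zero fun j _ => Finset.sum_eq_zero fun k _ => ?_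
  by_cases h : (i, j, k) ∈ Ω
  · have : W i j k = 0 := by simpa [projOmega, h] using congrFun (congrFun (congrFun hW i) j) k
    simp [this]
  · have : Y i j k = 0 := by rw [← hY]; simp [projOmega, h]
    simp [this]

end Norms

end Tensor

/-- lower bound on ‖Z + W‖_TTNN via a dual certificate. -/
theorem statement9 {n1 n2 n3 r : ℕ} (Φ : Matrix (Fin n3) (Fin n3) ℂ)
    (hΦ : Φ ∈ Matrix.unitaryGroup (Fin n3) ℂ)
    (Z : Tensor n1 n2 n3) (U : Tensor n1 r n3) (S : Tensor r r n3) (V : Tensor n2 r n3)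
    (hSVD : SkinnySVD Φ Z r U S V)
    (Ω : Set (Fin n1 × Fin n2 × Fin n3)) (Y : Tensor n1 n2 n3)
    (hYsupp : projOmega Ω Y = Y)
    (hY1 : frob (projT Φ U V Y - tprod Φ U (tconj Φ V)) ≤ 1 / (4 * (max n1 n2 : ℝ) * n3))
    (hY2 : specNorm Φ (projTperp Φ U V Y) ≤ 1 / 2) :
    ∀ W : Tensor n1 n2 n3, projOmega Ω W = 0 →
      ttnn Φ (Z + W) ≥ ttnn Φ Z + (1 / 2) * ttnn Φ (projTperp Φ U V W)
        - (1 / (4 * (max n1 n2 : ℝ) * n3)) * frob (projT Φ U V W) := by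
  intro W hW
  have hsub := hSVD.le_ttnn_add hΦ W
  have hdec := congrArg Complex.re (tinner_sub_tprod_tconj hΦ hSVD.U_orth hSVD.V_orth Y W)
  rw [tinner_sub_left, tinner_eq_zero_of_projOmega hYsupp hW, zero_sub, Complex.neg_re,
    Complex.add_re] at hdec
  have hT := (Complex.re_le_norm _).trans <| (norm_tinner_le_frob_mul_frob
    (projT Φ U V Y - tprod Φ U (tconj Φ V)) (projT Φ U V W)).trans <|
    mul_le_mul_of_nonneg_right hY1 (frob_nonneg _)
  have hTperp :=
    (re_tinner_le_specNorm_mul_ttnn hΦ (projTperp Φ U V Y) (projTperp Φ U V W)).trans <|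
      mul_le_mul_of_nonneg_right hY2 (ttnn_nonneg Φ _)
  linarith
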